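/- The 7-dimensional real Lie algebra spanned by X¹,…,X⁷ has trivial center: if c₁,…,c₇ ∈ ℝ and the vector field Y = c₁X¹ + c₂X² + c₃X³ + c₄X⁴ + c₅X⁵ + c₆X⁶ + c₇X⁷ satisfies [Y, Xⁱ] = 0 (as vector fields on ℂ³) for every i ∈ {1,…,7}, then c₁ = c₂ = c₃ = c₄ = c₅ = c₆ = c₇ = 0. -/

import Mathlib

/-!
Everything is evaluated at the origin, where `[Y, X](0) = DX(0) (Y 0) - DY(0) (X 0)` only sees
values and first derivatives. `X²` and `X³` vanish at `0` with diagonal linear parts, so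
`[Y, X²](0)` and `[Y, X³](0)` read off `Y 0 = (-c₄ + c₅ i, -c₆ + c₇ i, c₁ i)`, giving
`c₁ = c₄ = c₅ = c₆ = c₇ = 0`. The nonzero values `X¹(0) = (0, 0, i)` and `X⁴(0) = (-1, 0, 0)` then
probe `DY(0)`, giving `c₂ = 0` and `c₃ + c₇ = 0`.
-/

open Complex

noncomputable section

def X1 : ℂ × ℂ × ℂ → ℂ × ℂ × ℂ := fun _ => (0, 0, I)
def X2 : ℂ × ℂ × ℂ → ℂ × ℂ × ℂ := fun p => (p.1, 0, 2 * p.2.2)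
def X3 : ℂ × ℂ × ℂ → ℂ × ℂ × ℂ := fun p => (I * p.1, 2 * I * p.2.1, 0)
def X4 : ℂ × ℂ × ℂ → ℂ × ℂ × ℂ := fun p => (p.2.1 - 1, 0, -2 * p.1)
def X5 : ℂ × ℂ × ℂ → ℂ × ℂ × ℂ := fun p => (I + I * p.2.1, 0, -2 * I * p.1)
def X6 : ℂ × ℂ × ℂ → ℂ × ℂ × ℂ := fun p => (p.1 * p.2.1, p.2.1 ^ 2 - 1, -p.1 ^ 2)
def X7 : ℂ × ℂ × ℂ → ℂ × ℂ × ℂ := fun p => (I * p.1 * p.2.1, I * p.2.1 ^ 2 + I, -I * p.1 ^ 2)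

def Xfield : Fin 7 → (ℂ × ℂ × ℂ → ℂ × ℂ × ℂ) := ![X1, X2, X3, X4, X5, X6, X7]

open VectorField

section

variable (p v : ℂ × ℂ × ℂ)

@[fun_prop] lemma differentiable_X1 : Differentiable ℂ X1 := by unfold X1; fun_prop
@[fun_prop] lemma differentiable_X2 : Differentiable ℂ X2 := by unfold X2; fun_prop
@[fun_prop] lemma differentiable_X3 : Differentiable ℂ X3 := by unfold X3; fun_prop
@[fun_prop] lemma differentiable_X4 : Differentiable ℂ X4 := by unfold X4; fun_prop
@[fun_prop] lemma differentiable_X5 : Differentiable ℂ X5 := by unfold X5; fun_prop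
@[fun_prop] lemma differentiable_X6 : Differentiable ℂ X6 := by unfold X6; fun_prop
@[fun_prop] lemma differentiable_X7 : Differentiable ℂ X7 := by unfold X7; fun_prop

lemma fderiv_X1_apply : fderiv ℂ X1 p v = 0 := by
  unfold X1; simp

lemma fderiv_X2_apply : fderiv ℂ X2 p v = (v.1, 0, 2 * v.2.2) := by
  unfold X2
  rw [DifferentiableAt.fderiv_prodMk (by fun_prop) (by fun_prop),
    DifferentiableAt.fderiv_prodMk (by fun_prop) (by fun_prop)]
  simp (disch := fun_prop) [fderiv.fst, fderiv_const_mul, fderiv.snd]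

lemma fderiv_X3_apply : fderiv ℂ X3 p v = (I * v.1, 2 * I * v.2.1, 0) := by
  unfold X3
  rw [DifferentiableAt.fderiv_prodMk (by fun_prop) (by fun_prop),
    DifferentiableAt.fderiv_prodMk (by fun_prop) (by fun_prop)]
  simp (disch := fun_prop) [fderiv.fst, fderiv_const_mul, fderiv.snd]

lemma fderiv_X4_apply : fderiv ℂ X4 p v = (v.2.1, 0, -2 * v.1) := by
  unfold X4
  rw [DifferentiableAt.fderiv_prodMk (by fun_prop) (by fun_prop),
    DifferentiableAt.fderiv_prodMk (by fun_prop) (by fun_prop)]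
  simp (disch := fun_prop) [fderiv.fst, fderiv_const_mul, fderiv.snd, fderiv_fun_sub]

lemma fderiv_X5_apply : fderiv ℂ X5 p v = (I * v.2.1, 0, -2 * I * v.1) := by
  unfold X5
  rw [DifferentiableAt.fderiv_prodMk (by fun_prop) (by fun_prop),
    DifferentiableAt.fderiv_prodMk (by fun_prop) (by fun_prop)]
  simp (disch := fun_prop) [fderiv.fst, fderiv_const_mul, fderiv.snd, fderiv_const_add]

lemma fderiv_X6_apply :
    fderiv ℂ X6 p v = (p.1 * v.2.1 + p.2.1 * v.1, 2 * p.2.1 * v.2.1, -(2 * p.1 * v.1)) := by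
  unfold X6
  rw [DifferentiableAt.fderiv_prodMk (by fun_prop) (by fun_prop),
    DifferentiableAt.fderiv_prodMk (by fun_prop) (by fun_prop)]
  simp (disch := fun_prop) [fderiv_fun_mul, fderiv_fun_pow, fderiv_fun_neg, fderiv_fun_sub,
    fderiv.fst, fderiv_snd]

lemma X7_eq_I_smul_X6_add_const : X7 = fun p => I • X6 p + (0, 2 * I, 0) := by
  funext p
  simp only [X6, X7, Prod.smul_mk, smul_eq_mul, Prod.mk_add_mk, Prod.mk.injEq]
  refine ⟨?_, ?_, ?_⟩ <;> ring

lemma fderiv_X7_apply : fderiv ℂ X7 p v = I • fderiv ℂ X6 p v := by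
  rw [X7_eq_I_smul_X6_add_const, fderiv_add_const, fderiv_fun_const_smul (by fun_prop)]
  rfl

variable (c1 c2 c3 c4 c5 c6 c7 : ℝ)

def Xcomb : ℂ × ℂ × ℂ → ℂ × ℂ × ℂ := fun p => c1 • X1 p + c2 • X2 p + c3 • X3 p + c4 • X4 p
  + c5 • X5 p + c6 • X6 p + c7 • X7 p

lemma Xcomb_zero : Xcomb c1 c2 c3 c4 c5 c6 c7 0 = (-c4 + c5 * I, -c6 + c7 * I, c1 * I) := by
  simp [Xcomb, X1, X2, X3, X4, X5, X6, X7]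

lemma fderiv_Xcomb_apply : fderiv ℂ (Xcomb c1 c2 c3 c4 c5 c6 c7) p v =
    c1 • fderiv ℂ X1 p v + c2 • fderiv ℂ X2 p v + c3 • fderiv ℂ X3 p v + c4 • fderiv ℂ X4 p v
      + c5 • fderiv ℂ X5 p v + c6 • fderiv ℂ X6 p v + c7 • fderiv ℂ X7 p v := by
  unfold Xcomb
  simp (disch := fun_prop) [fderiv_fun_add, fderiv_fun_const_smul]

lemma fderiv_Xcomb_zero_apply : fderiv ℂ (Xcomb c1 c2 c3 c4 c5 c6 c7) 0 v =
    ((c2 + c3 * I) * v.1 + (c4 + c5 * I) * v.2.1, 2 * c3 * I * v.2.1,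
      -2 * (c4 + c5 * I) * v.1 + 2 * c2 * v.2.2) := by
  simp only [fderiv_Xcomb_apply, fderiv_X1_apply, fderiv_X2_apply, fderiv_X3_apply,
    fderiv_X4_apply, fderiv_X5_apply, fderiv_X6_apply, fderiv_X7_apply, Prod.fst_zero,
    Prod.snd_zero, smul_zero, Prod.smul_mk, real_smul, smul_eq_mul, Prod.mk_add_mk, zero_add,
    add_zero, mul_zero, zero_mul, neg_zero, neg_mul, smul_neg, Prod.mk.injEq]
  refine ⟨?_, ?_, ?_⟩ <;> ring

lemma lieBracket_Xcomb_X1_zero :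
    lieBracket ℂ (Xcomb c1 c2 c3 c4 c5 c6 c7) X1 0 = (0, 0, -2 * c2 * I) := by
  simp [lieBracket, fderiv_X1_apply, fderiv_Xcomb_zero_apply, X1]

lemma lieBracket_Xcomb_X2_zero :
    lieBracket ℂ (Xcomb c1 c2 c3 c4 c5 c6 c7) X2 0 = (-c4 + c5 * I, 0, 2 * c1 * I) := by
  simp only [lieBracket, Xcomb_zero, fderiv_X2_apply, fderiv_Xcomb_zero_apply, X2, Prod.fst_zero,
    Prod.snd_zero, Prod.mk_sub_mk, Prod.mk.injEq]
  refine ⟨?_, ?_, ?_⟩ <;> ring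

lemma lieBracket_Xcomb_X3_zero :
    lieBracket ℂ (Xcomb c1 c2 c3 c4 c5 c6 c7) X3 0 =
      (I * (-c4 + c5 * I), 2 * I * (-c6 + c7 * I), 0) := by
  simp only [lieBracket, Xcomb_zero, fderiv_X3_apply, fderiv_Xcomb_zero_apply, X3, Prod.fst_zero,
    Prod.snd_zero, Prod.mk_sub_mk, Prod.mk.injEq]
  refine ⟨?_, ?_, ?_⟩ <;> ring

lemma lieBracket_Xcomb_X4_zero :
    lieBracket ℂ (Xcomb c1 c2 c3 c4 c5 c6 c7) X4 0 = (c2 - c6 + (c3 + c7) * I, 0, -4 * c5 * I) := by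
  simp only [lieBracket, Xcomb_zero, fderiv_X4_apply, fderiv_Xcomb_zero_apply, X4, Prod.fst_zero,
    Prod.snd_zero, Prod.mk_sub_mk, Prod.mk.injEq]
  refine ⟨?_, ?_, ?_⟩ <;> ring

end

/-- The `7`-dimensional real Lie algebra spanned by `X¹, …, X⁷` has trivial center:
a real linear combination commuting with all the `Xⁱ` is zero. -/
theorem Xfield_center_trivial (c1 c2 c3 c4 c5 c6 c7 : ℝ) (Y : ℂ × ℂ × ℂ → ℂ × ℂ × ℂ)
    (hY : Y = fun p => c1 • X1 p + c2 • X2 p + c3 • X3 p + c4 • X4 p + c5 • X5 p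
      + c6 • X6 p + c7 • X7 p)
    (hcomm : ∀ i : Fin 7, VectorField.lieBracket ℂ Y (Xfield i) = 0) :
    c1 = 0 ∧ c2 = 0 ∧ c3 = 0 ∧ c4 = 0 ∧ c5 = 0 ∧ c6 = 0 ∧ c7 = 0 := by
  subst hY
  have h1 := (lieBracket_Xcomb_X1_zero c1 c2 c3 c4 c5 c6 c7).symm.trans (congrFun (hcomm 0) 0)
  have h2 := (lieBracket_Xcomb_X2_zero c1 c2 c3 c4 c5 c6 c7).symm.trans (congrFun (hcomm 1) 0)
  have h3 := (lieBracket_Xcomb_X3_zero c1 c2 c3 c4 c5 c6 c7).symm.trans (congrFun (hcomm 2) 0)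
  have h4 := (lieBracket_Xcomb_X4_zero c1 c2 c3 c4 c5 c6 c7).symm.trans (congrFun (hcomm 3) 0)
  clear hcomm
  simp_all [Prod.ext_iff, Complex.ext_iff]
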